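/- arXiv:math/0310290 — 6 statements merged into one kernel-verified Lean document; each statement's English description precedes it below -/
import Mathlib

section
/- Let $(X_n)$ be an almost increasing sequence of positive reals and $(A_n)$ a sequence of positive reals that is $\delta$-quasi-monotone (i.e. $A_n \to 0$, $A_n > 0$ ultimately, and $\Delta A_n = A_n - A_{n+1} \geq -\delta_n$ for some positive sequence $(\delta_n)$) such that $\sum_n n A_n X_n$ converges and $\sum_n n \delta_n X_n$ converges. Then $n A_n X_n = O(1)$ as $n \to \infty$ and $\sum_{n=1}^{\infty} |\Delta(n A_n)| X_n < \infty$. -/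
/-- A positive sequence `b` is almost increasing. -/
def AlmostIncreasing (b : ℕ → ℝ) : Prop :=
  ∃ (c : ℕ → ℝ) (A B : ℝ), 0 < A ∧ 0 < B ∧ (∀ n, 0 < c n) ∧ StrictMono c ∧
    ∀ n, A * c n ≤ b n ∧ b n ≤ B * c n

/-- `A` is `δ`-quasi-monotone: `A n → 0`, `A n > 0` ultimately, and `A n - A (n+1) ≥ -δ n`. -/
def DeltaQuasiMonotone (A δ : ℕ → ℝ) : Prop :=
  Filter.Tendsto A Filter.atTop (nhds 0) ∧ (∀ᶠ n in Filter.atTop, 0 < A n) ∧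
    ∀ n, A n - A (n + 1) ≥ -δ n

/-- If `X` is almost increasing and `A` is positive and `δ`-quasi-monotone with
`∑ n A_n X_n` and `∑ n δ_n X_n` convergent, then `n A_n X_n = O(1)` and
`∑ |Δ(n A_n)| X_n < ∞`. -/
theorem quasiMonotone_estimates (X A δ : ℕ → ℝ) (hX : AlmostIncreasing X)
    (hApos : ∀ n, 0 < A n) (hδpos : ∀ n, 0 < δ n) (hqm : DeltaQuasiMonotone A δ)
    (hAX : Summable (fun n : ℕ => (n : ℝ) * A n * X n))
    (hδX : Summable (fun n : ℕ => (n : ℝ) * δ n * X n)) :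
    (∃ C : ℝ, ∀ n : ℕ, (n : ℝ) * A n * X n ≤ C) ∧
      Summable (fun n : ℕ => |(n : ℝ) * A n - ((n : ℝ) + 1) * A (n + 1)| * X n) := by
  obtain ⟨c, ca, cb, hca, hcb, hcpos, hcmono, hc⟩ := hX
  obtain ⟨_, _, hqm3⟩ := hqm
  have hXpos : ∀ n, 0 < X n := fun n =>
    lt_of_lt_of_le (mul_pos hca (hcpos n)) (hc n).1
  have hAXnn : ∀ n : ℕ, 0 ≤ (n : ℝ) * A n * X n := fun n =>
    mul_nonneg (mul_nonneg (Nat.cast_nonneg n) (hApos n).le) (hXpos n).le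
  have hδXnn : ∀ n : ℕ, 0 ≤ (n : ℝ) * δ n * X n := fun n =>
    mul_nonneg (mul_nonneg (Nat.cast_nonneg n) (hδpos n).le) (hXpos n).le
  -- Part 1: boundedness
  have h1 : ∃ C : ℝ, ∀ n : ℕ, (n : ℝ) * A n * X n ≤ C := by
    obtain ⟨C, hC⟩ := hAX.tendsto_atTop_zero.bddAbove_range
    exact ⟨C, fun n => hC (Set.mem_range_self n)⟩
  refine ⟨h1, ?_⟩
  -- the nonnegative "corrected difference"
  set d : ℕ → ℝ := fun n => A n - A (n + 1) + δ n with hd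
  have hdnn : ∀ n, 0 ≤ d n := fun n => by
    have := hqm3 n; simp only [hd]; linarith
  set S₁ : ℝ := ∑' n : ℕ, (n : ℝ) * A n * X n with hS₁
  set S₂ : ℝ := ∑' n : ℕ, (n : ℝ) * δ n * X n with hS₂
  -- key Abel bound
  have habel : ∀ N : ℕ,
      ∑ n ∈ Finset.range N, (n : ℝ) * c n * (A n - A (n + 1)) ≤ (1 / ca) * S₁ := by
    intro N
    have key : ∀ n : ℕ, (n : ℝ) * c n * (A n - A (n + 1)) =
        ((n : ℝ) * c n * A n - ((n : ℝ) + 1) * c (n + 1) * A (n + 1)) +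
          ((((n : ℝ) + 1) * c (n + 1) - (n : ℝ) * c n) * A (n + 1)) := by
      intro n; ring
    rw [Finset.sum_congr rfl fun n _ => key n, Finset.sum_add_distrib]
    have htel : ∑ n ∈ Finset.range N,
        ((n : ℝ) * c n * A n - ((n : ℝ) + 1) * c (n + 1) * A (n + 1)) ≤ 0 := by
      have := Finset.sum_range_sub' (fun n : ℕ => (n : ℝ) * c n * A n) N
      push_cast at this ⊢
      rw [this]
      simp only [Nat.cast_zero, zero_mul]
      have : 0 ≤ (N : ℝ) * c N * A N := by
        have := (hcpos N).le; have := (hApos N).le; positivity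
      linarith
    have hrest : ∑ n ∈ Finset.range N,
        ((((n : ℝ) + 1) * c (n + 1) - (n : ℝ) * c n) * A (n + 1)) ≤ (1 / ca) * S₁ := by
      have step : ∀ n ∈ Finset.range N,
          (((n : ℝ) + 1) * c (n + 1) - (n : ℝ) * c n) * A (n + 1) ≤
            (1 / ca) * (((n : ℝ) + 1) * A (n + 1) * X (n + 1)) := by
        intro n _
        have h1 : (((n : ℝ) + 1) * c (n + 1) - (n : ℝ) * c n) * A (n + 1) ≤
            ((n : ℝ) + 1) * c (n + 1) * A (n + 1) := by
          have : 0 ≤ (n : ℝ) * c n * A (n + 1) := by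
            have := (hcpos n).le; have := (hApos (n + 1)).le; positivity
          nlinarith
        have h2 : c (n + 1) ≤ (1 / ca) * X (n + 1) := by
          rw [div_mul_eq_mul_div, le_div_iff₀ hca, one_mul, mul_comm]
          exact (hc (n + 1)).1
        calc (((n : ℝ) + 1) * c (n + 1) - (n : ℝ) * c n) * A (n + 1)
            ≤ ((n : ℝ) + 1) * c (n + 1) * A (n + 1) := h1
          _ ≤ ((n : ℝ) + 1) * ((1 / ca) * X (n + 1)) * A (n + 1) := by
              have hn1 : (0:ℝ) ≤ (n : ℝ) + 1 := by positivity
              exact mul_le_mul_of_nonneg_right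
                (mul_le_mul_of_nonneg_left h2 hn1) (hApos (n + 1)).le
          _ = (1 / ca) * (((n : ℝ) + 1) * A (n + 1) * X (n + 1)) := by ring
      calc ∑ n ∈ Finset.range N, ((((n : ℝ) + 1) * c (n + 1) - (n : ℝ) * c n) * A (n + 1))
          ≤ ∑ n ∈ Finset.range N, (1 / ca) * (((n : ℝ) + 1) * A (n + 1) * X (n + 1)) :=
            Finset.sum_le_sum step
        _ = (1 / ca) * ∑ n ∈ Finset.range N, (((n : ℝ) + 1) * A (n + 1) * X (n + 1)) := by
            rw [Finset.mul_sum]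
        _ ≤ (1 / ca) * S₁ := by
            apply mul_le_mul_of_nonneg_left _ (by positivity)
            have := Finset.sum_range_succ' (fun n : ℕ => (n : ℝ) * A n * X n) N
            have heq : ∑ n ∈ Finset.range N, (((n : ℝ) + 1) * A (n + 1) * X (n + 1)) =
                ∑ n ∈ Finset.range (N + 1), ((n : ℝ) * A n * X n) := by
              rw [this]; push_cast; simp
            rw [heq]
            exact Summable.sum_le_tsum _ (fun i _ => hAXnn i) hAX
    linarith
  -- summability of n X n d n
  have hsumd : Summable (fun n : ℕ => (n : ℝ) * X n * d n) := by
    apply summable_of_sum_range_le (c := cb * ((1 / ca) * S₁ + (1 / ca) * S₂))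
    · intro n
      have := (hXpos n).le; have := hdnn n; positivity
    · intro N
      have step1 : ∀ n ∈ Finset.range N, (n : ℝ) * X n * d n ≤
          cb * ((n : ℝ) * c n * d n) := by
        intro n _
        have hx : X n ≤ cb * c n := (hc n).2
        have hn : (0:ℝ) ≤ (n : ℝ) := Nat.cast_nonneg n
        nlinarith [mul_le_mul_of_nonneg_left hx (mul_nonneg hn (hdnn n))]
      have step2 : ∀ n ∈ Finset.range N, (n : ℝ) * c n * δ n ≤
          (1 / ca) * ((n : ℝ) * δ n * X n) := by
        intro n _
        have h2 : c n ≤ (1 / ca) * X n := by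
          rw [div_mul_eq_mul_div, le_div_iff₀ hca, one_mul, mul_comm]
          exact (hc n).1
        have hn : (0:ℝ) ≤ (n : ℝ) := Nat.cast_nonneg n
        nlinarith [mul_le_mul_of_nonneg_left h2 (mul_nonneg hn (hδpos n).le)]
      calc ∑ n ∈ Finset.range N, (n : ℝ) * X n * d n
          ≤ ∑ n ∈ Finset.range N, cb * ((n : ℝ) * c n * d n) := Finset.sum_le_sum step1
        _ = cb * ∑ n ∈ Finset.range N, ((n : ℝ) * c n * d n) := by rw [Finset.mul_sum]
        _ ≤ cb * ((1 / ca) * S₁ + (1 / ca) * S₂) := by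
            apply mul_le_mul_of_nonneg_left _ hcb.le
            have hsplit : ∑ n ∈ Finset.range N, ((n : ℝ) * c n * d n) =
                (∑ n ∈ Finset.range N, (n : ℝ) * c n * (A n - A (n + 1))) +
                  ∑ n ∈ Finset.range N, (n : ℝ) * c n * δ n := by
              rw [← Finset.sum_add_distrib]
              exact Finset.sum_congr rfl fun n _ => by simp only [hd]; ring
            rw [hsplit]
            have h2 : ∑ n ∈ Finset.range N, (n : ℝ) * c n * δ n ≤ (1 / ca) * S₂ := by
              calc ∑ n ∈ Finset.range N, (n : ℝ) * c n * δ n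
                  ≤ ∑ n ∈ Finset.range N, (1 / ca) * ((n : ℝ) * δ n * X n) :=
                    Finset.sum_le_sum step2
                _ = (1 / ca) * ∑ n ∈ Finset.range N, ((n : ℝ) * δ n * X n) := by
                    rw [Finset.mul_sum]
                _ ≤ (1 / ca) * S₂ := by
                    apply mul_le_mul_of_nonneg_left _ (by positivity)
                    exact Summable.sum_le_tsum _ (fun i _ => hδXnn i) hδX
            linarith [habel N]
  -- shifted summable series
  have hshift : Summable (fun n : ℕ => ((n : ℝ) + 1) * A (n + 1) * X (n + 1)) := by
    have := (summable_nat_add_iff 1).2 hAX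
    simpa [Nat.cast_add] using this
  -- final comparison
  have hmaj : Summable (fun n : ℕ =>
      (n : ℝ) * X n * d n + (n : ℝ) * δ n * X n +
        (cb / ca) * (((n : ℝ) + 1) * A (n + 1) * X (n + 1))) :=
    ((hsumd.add hδX).add (hshift.mul_left _))
  apply Summable.of_nonneg_of_le (fun n => ?_) (fun n => ?_) hmaj
  · have := (hXpos n).le; positivity
  · have habs : |A n - A (n + 1)| ≤ d n + δ n := by
      have := hqm3 n
      rw [abs_le]; constructor <;> simp only [hd] <;> linarith [(hδpos n).le]
    have hXc : X n ≤ (cb / ca) * X (n + 1) := by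
      have h1 : X n ≤ cb * c n := (hc n).2
      have h2 : c n ≤ c (n + 1) := (hcmono (Nat.lt_succ_self n)).le
      have h3 : ca * c (n + 1) ≤ X (n + 1) := (hc (n + 1)).1
      rw [div_mul_eq_mul_div, le_div_iff₀ hca]
      nlinarith [mul_le_mul_of_nonneg_right h1 hca.le,
        mul_le_mul_of_nonneg_left h3 hcb.le,
        mul_le_mul_of_nonneg_left h2 (mul_nonneg hcb.le hca.le)]
    have htri : |(n : ℝ) * A n - ((n : ℝ) + 1) * A (n + 1)| ≤
        (n : ℝ) * |A n - A (n + 1)| + A (n + 1) := by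
      have : (n : ℝ) * A n - ((n : ℝ) + 1) * A (n + 1) =
          (n : ℝ) * (A n - A (n + 1)) - A (n + 1) := by ring
      rw [this]
      calc |(n : ℝ) * (A n - A (n + 1)) - A (n + 1)|
          ≤ |(n : ℝ) * (A n - A (n + 1))| + |A (n + 1)| := abs_sub _ _
        _ = (n : ℝ) * |A n - A (n + 1)| + A (n + 1) := by
            rw [abs_mul, Nat.abs_cast, abs_of_pos (hApos (n + 1))]
    have hn : (0:ℝ) ≤ (n : ℝ) := Nat.cast_nonneg n
    have hX := (hXpos n).le
    have hA1 := (hApos (n + 1)).le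
    calc |(n : ℝ) * A n - ((n : ℝ) + 1) * A (n + 1)| * X n
        ≤ ((n : ℝ) * |A n - A (n + 1)| + A (n + 1)) * X n := by
          apply mul_le_mul_of_nonneg_right htri hX
      _ ≤ ((n : ℝ) * (d n + δ n) + A (n + 1)) * X n := by
          apply mul_le_mul_of_nonneg_right _ hX
          have := mul_le_mul_of_nonneg_left habs hn
          linarith
      _ = (n : ℝ) * X n * d n + (n : ℝ) * δ n * X n + A (n + 1) * X n := by ring
      _ ≤ (n : ℝ) * X n * d n + (n : ℝ) * δ n * X n +
            (cb / ca) * (((n : ℝ) + 1) * A (n + 1) * X (n + 1)) := by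
          have h1 : A (n + 1) * X n ≤ A (n + 1) * ((cb / ca) * X (n + 1)) :=
            mul_le_mul_of_nonneg_left hXc hA1
          have h2 : A (n + 1) * ((cb / ca) * X (n + 1)) ≤
              (cb / ca) * (((n : ℝ) + 1) * A (n + 1) * X (n + 1)) := by
            have hX1 := (hXpos (n + 1)).le
            have hcca : (0:ℝ) ≤ cb / ca := by positivity
            nlinarith [mul_nonneg (mul_nonneg hn hA1) hX1]
          linarith
end

section
/- Let $(X_n)$ be an almost increasing positive sequence, and let $(\lambda_n)$ satisfy $|\lambda_n| X_n = O(1)$. Suppose $(A_n)$ is a $\delta$-quasi-monotone sequence with $\sum n A_n X_n$ convergent and $|\Delta \lambda_n| = |\lambda_n - \lambda_{n+1}| \leq |A_n|$ for all $n$. Then $\sum_{n=1}^{\infty} |\Delta \lambda_n| X_n < \infty$ and $(\lambda_n)$ is bounded. -/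
/-- If `X` is almost increasing, `|λ_n| X_n = O(1)`, and `A` is `δ`-quasi-monotone with
`∑ n A_n X_n` convergent and `|Δλ_n| ≤ |A_n|`, then `∑ |Δλ_n| X_n < ∞` and `λ` is bounded. -/
theorem lambda_estimates (X A δ lam : ℕ → ℝ) (hX : AlmostIncreasing X)
    (hlamX : ∃ C : ℝ, ∀ n, |lam n| * X n ≤ C)
    (hδpos : ∀ n, 0 < δ n) (hqm : DeltaQuasiMonotone A δ)
    (hAX : Summable (fun n : ℕ => (n : ℝ) * A n * X n))
    (hΔ : ∀ n, |lam n - lam (n + 1)| ≤ |A n|) :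
    Summable (fun n : ℕ => |lam n - lam (n + 1)| * X n) ∧ ∃ M : ℝ, ∀ n, |lam n| ≤ M := by
  obtain ⟨c, Ac, Bc, hAc, hBc, hc, hmono, hb⟩ := hX
  obtain ⟨C, hC⟩ := hlamX
  have hXpos : ∀ n, 0 < X n := fun n => lt_of_lt_of_le (mul_pos hAc (hc n)) (hb n).1
  have hXlb : ∀ n, Ac * c 0 ≤ X n := fun n =>
    le_trans (mul_le_mul_of_nonneg_left (hmono.monotone (Nat.zero_le n)) hAc.le) (hb n).1
  constructor
  · obtain ⟨N, hN⟩ := Filter.eventually_atTop.mp hqm.2.1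
    set N' := max N 1 with hN'
    rw [← summable_nat_add_iff N']
    have hsum : Summable (fun n => ((n + N' : ℕ) : ℝ) * A (n + N') * X (n + N')) :=
      (summable_nat_add_iff N').mpr hAX
    apply Summable.of_nonneg_of_le _ _ hsum
    · intro n; exact mul_nonneg (abs_nonneg _) (hXpos _).le
    · intro n
      have hApos : 0 < A (n + N') := hN _ (le_trans (le_max_left N 1) (Nat.le_add_left N' n))
      have h1 : |lam (n+N') - lam (n+N'+1)| * X (n+N') ≤ A (n+N') * X (n+N') := by
        apply mul_le_mul_of_nonneg_right _ (hXpos _).le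
        calc |lam (n+N') - lam (n+N'+1)| ≤ |A (n+N')| := hΔ _
          _ = A (n+N') := abs_of_pos hApos
      refine h1.trans ?_
      have hge : (1:ℝ) ≤ ((n + N' : ℕ) : ℝ) := by
        have : 1 ≤ n + N' := le_trans (le_max_right N 1) (Nat.le_add_left N' n)
        exact_mod_cast this
      nlinarith [mul_pos hApos (hXpos (n+N'))]
  · refine ⟨C / (Ac * c 0), fun n => ?_⟩
    have h0 : 0 < Ac * c 0 := mul_pos hAc (hc 0)
    rw [le_div_iff₀ h0]
    calc |lam n| * (Ac * c 0) ≤ |lam n| * X n :=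
          mul_le_mul_of_nonneg_left (hXlb n) (abs_nonneg _)
      _ ≤ C := hC n
end

section
/- Let $0 < \alpha \leq 1$ and define $t_n^{\alpha} = \frac{1}{A_n^{\alpha}} \sum_{v=1}^{n} A_{n-v}^{\alpha-1} v a_v$ (the $n$th Cesàro mean of order $\alpha$ of $(n a_n)$), and $w_n^{\alpha} = |t_n^{\alpha}|$ if $\alpha = 1$, $w_n^{\alpha} = \max_{1 \leq v \leq n} |t_v^{\alpha}|$ if $0 < \alpha < 1$. Then for $1 \leq v \leq n$, $\left|\sum_{p=1}^{v} A_{n-p}^{\alpha-1} p a_p\right| \leq A_v^{\alpha} w_v^{\alpha}$. -/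
noncomputable def cesaroA (β : ℝ) (n : ℕ) : ℝ :=
  ∏ i ∈ Finset.range n, (β + i + 1) / (i + 1)

/-- `t_n^α`, the `n`th Cesàro mean of order `α` of the sequence `(n a_n)`. -/
noncomputable def tCes (α : ℝ) (a : ℕ → ℝ) (n : ℕ) : ℝ :=
  (cesaroA α n)⁻¹ * ∑ v ∈ Finset.Icc 1 n, cesaroA (α - 1) (n - v) * v * a v

/-- `w_n^α = |t_n^α|` if `α = 1`, and `max_{1 ≤ v ≤ n} |t_v^α|` if `0 < α < 1`. -/
noncomputable def wCes (α : ℝ) (a : ℕ → ℝ) (n : ℕ) : ℝ :=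
  if α = 1 then |tCes 1 a n|
  else sSup ((fun v => |tCes α a v|) '' (Set.Icc 1 n))

/-!
Put `c_p = p a_p` and `S_j = ∑_{q ≤ j} A^{α-1}_{j-q} c_q = A^α_j t_j`. The generating function of
`A^β` is `(1 - x)^{-β-1}`, so convolution with `A^{-α-1}` inverts convolution with `A^{α-1}` and
`c_p = ∑_{j ≤ p} A^{-α-1}_{p-j} S_j`. Substituting, the truncated sum `∑_{p ≤ v} A^{α-1}_{n-p} c_p`
becomes `∑_{j ≤ v} λ_j S_j`, where `λ_j` is a partial sum of the convolution
`A^{-α-1} * A^{α-1} = A^{-1} = δ`. For `0 ≤ α ≤ 1` the omitted terms are `≤ 0`, so `λ_j ≥ 0`; and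
`∑_j λ_j = ∑_{p ≤ v} A^{α-1}_{n-p} A^{-α}_p ≤ A^0_n = 1`. Hence the truncated sum is at most
`max_{j ≤ v} |S_j| ≤ A^α_v w_v`, as `A^α` is increasing. For `α = 1`, `A^0 ≡ 1` and the sum is
exactly `A^1_v t_v`.
-/

open Finset PowerSeries

lemma Ring.choose_eq_prod_div {K : Type*} [Field K] [CharZero K] (a : K) (n : ℕ) :
    Ring.choose a n = (∏ j ∈ range n, (a - j)) / n.factorial := by
  rw [Ring.choose_eq_smul, ← descPochhammer_eval_eq_prod_range,
    ← descPochhammer_map (algebraMap ℤ K), Polynomial.eval_map_algebraMap,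
    Polynomial.aeval_eq_smeval, smul_eq_mul, inv_mul_eq_div]

lemma cesaroA_eq_neg_one_pow_mul_choose (β : ℝ) (n : ℕ) :
    cesaroA β n = (-1) ^ n * Ring.choose (-β - 1) n := by
  have h : (-1 : ℝ) ^ n = ∏ _i ∈ range n, (-1) := by simp
  rw [Ring.choose_eq_prod_div, cesaroA, prod_div_distrib, ← prod_range_add_one_eq_factorial,
    mul_div_assoc', h, ← prod_mul_distrib]
  push_cast
  congr 1
  exact prod_congr rfl fun i _ => by ring

-- The generating function `(1 - X)^{-β-1}`.
lemma mk_cesaroA (β : ℝ) : mk (cesaroA β) = rescale (-1) (binomialSeries ℝ (-β - 1)) := by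
  ext n
  rw [coeff_mk, coeff_rescale, binomialSeries_coeff, smul_eq_mul, mul_one,
    cesaroA_eq_neg_one_pow_mul_choose]

lemma mk_cesaroA_mul_mk_cesaroA (β γ : ℝ) :
    mk (cesaroA β) * mk (cesaroA γ) = mk (cesaroA (β + γ + 1)) := by
  rw [mk_cesaroA, mk_cesaroA, mk_cesaroA, ← map_mul, ← binomialSeries_add]
  ring_nf

lemma mk_cesaroA_neg_one : mk (cesaroA (-1)) = 1 := by
  rw [mk_cesaroA, neg_neg, sub_self, binomialSeries_zero, map_one]

lemma PowerSeries.coeff_mul_eq_sum_range {R : Type*} [CommSemiring R] (f g : R⟦X⟧) (n : ℕ) :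
    coeff n (f * g) = ∑ k ∈ range (n + 1), coeff k f * coeff (n - k) g :=
  coeff_mul n f g ▸ Nat.sum_antidiagonal_eq_sum_range_succ (fun i j => coeff i f * coeff j g) n

lemma sum_range_cesaroA_mul_cesaroA (β γ : ℝ) (m : ℕ) :
    ∑ k ∈ range (m + 1), cesaroA β k * cesaroA γ (m - k) = cesaroA (β + γ + 1) m := by
  simpa only [coeff_mul_eq_sum_range, coeff_mk] using
    congrArg (coeff m) (mk_cesaroA_mul_mk_cesaroA β γ)

lemma cesaroA_zero_left (n : ℕ) : cesaroA 0 n = 1 :=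
  prod_eq_one fun i _ => by rw [zero_add, div_self (by positivity)]

lemma cesaroA_succ (β : ℝ) (n : ℕ) :
    cesaroA β (n + 1) = cesaroA β n * ((β + n + 1) / (n + 1)) :=
  prod_range_succ _ _

lemma cesaroA_nonneg {β : ℝ} (hβ : -1 ≤ β) (n : ℕ) : 0 ≤ cesaroA β n :=
  prod_nonneg fun i _ => div_nonneg (by linarith [i.cast_nonneg (α := ℝ)]) (by positivity)

lemma cesaroA_pos {β : ℝ} (hβ : -1 < β) (n : ℕ) : 0 < cesaroA β n :=
  prod_pos fun i _ => div_pos (by linarith [i.cast_nonneg (α := ℝ)]) (by positivity)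

lemma cesaroA_nonpos {β : ℝ} (h2 : -2 ≤ β) (h1 : β ≤ -1) {n : ℕ} (hn : n ≠ 0) :
    cesaroA β n ≤ 0 := by
  obtain ⟨m, rfl⟩ := Nat.exists_eq_succ_of_ne_zero hn
  rw [cesaroA, prod_range_succ']
  refine mul_nonpos_of_nonneg_of_nonpos (prod_nonneg fun i _ => ?_) ?_
  · exact div_nonneg (by push_cast; linarith [i.cast_nonneg (α := ℝ)]) (by positivity)
  · norm_num
    linarith

lemma cesaroA_monotone {β : ℝ} (hβ : 0 ≤ β) : Monotone (cesaroA β) := by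
  refine monotone_nat_of_le_succ fun n => ?_
  rw [cesaroA_succ]
  refine le_mul_of_one_le_right (cesaroA_nonneg (by linarith) n) ?_
  rw [one_le_div (by positivity)]
  linarith

-- `A^β * A^{-β-2} = A^{-1} = δ`
lemma sum_range_cesaroA_inversion (β : ℝ) (c : ℕ → ℝ) (p : ℕ) :
    ∑ j ∈ range (p + 1), (∑ q ∈ range (j + 1), c q * cesaroA β (j - q)) *
      cesaroA (-β - 2) (p - j) = c p := by
  have h : mk c * mk (cesaroA β) * mk (cesaroA (-β - 2)) = mk c := by
    rw [mul_assoc, mk_cesaroA_mul_mk_cesaroA, show β + (-β - 2) + 1 = -1 by ring,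
      mk_cesaroA_neg_one, mul_one]
  simpa only [coeff_mul_eq_sum_range, coeff_mk] using congrArg (coeff p) h

lemma sum_Icc_one_eq_sum_range {M : Type*} [AddCommMonoid M] {f : ℕ → M} (hf : f 0 = 0)
    (n : ℕ) : ∑ i ∈ Icc 1 n, f i = ∑ i ∈ range (n + 1), f i := by
  rw [← Ico_add_one_right_eq_Icc, range_eq_Ico, sum_eq_sum_Ico_succ_bot n.succ_pos, hf, zero_add]
  rfl

noncomputable def cesaroWeight (β : ℝ) (n v j : ℕ) : ℝ :=
  ∑ k ∈ range (v + 1 - j), cesaroA (-β - 2) k * cesaroA β (n - (j + k))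

lemma sum_range_cesaroA_mul_eq_sum_cesaroWeight_mul (β : ℝ) (c : ℕ → ℝ) (v n : ℕ) :
    ∑ p ∈ range (v + 1), cesaroA β (n - p) * c p =
      ∑ j ∈ range (v + 1),
        cesaroWeight β n v j * ∑ q ∈ range (j + 1), c q * cesaroA β (j - q) := by
  set S : ℕ → ℝ := fun j => ∑ q ∈ range (j + 1), c q * cesaroA β (j - q)
  calc ∑ p ∈ range (v + 1), cesaroA β (n - p) * c p
      = ∑ p ∈ range (v + 1), ∑ j ∈ range (p + 1),
          cesaroA β (n - (j + (p - j))) * (S j * cesaroA (-β - 2) (p - j)) := by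
        refine sum_congr rfl fun p _ => ?_
        rw [← sum_range_cesaroA_inversion β c p, mul_sum]
        refine sum_congr rfl fun j hj => ?_
        rw [Nat.add_sub_cancel' (Nat.lt_succ_iff.mp (mem_range.mp hj))]
    _ = ∑ j ∈ range (v + 1), ∑ k ∈ range (v + 1 - j),
          cesaroA β (n - (j + k)) * (S j * cesaroA (-β - 2) k) :=
        sum_range_diag_flip (v + 1) fun j k =>
          cesaroA β (n - (j + k)) * (S j * cesaroA (-β - 2) k)
    _ = ∑ j ∈ range (v + 1), cesaroWeight β n v j * S j := by
        refine sum_congr rfl fun j _ => ?_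
        rw [cesaroWeight, sum_mul]
        exact sum_congr rfl fun k _ => by ring

-- The omitted terms are `≤ 0` and the full sum is `A^{-1}_m ≥ 0`.
lemma sum_range_cesaroA_mul_cesaroA_nonneg {β : ℝ} (hβ1 : -1 ≤ β) (hβ0 : β ≤ 0) {r m : ℕ}
    (hrm : r ≤ m + 1) :
    0 ≤ ∑ k ∈ range r, cesaroA (-β - 2) k * cesaroA β (m - k) := by
  rcases Nat.eq_zero_or_pos r with rfl | hr
  · simp
  have htotal := sum_range_cesaroA_mul_cesaroA (-β - 2) β m
  rw [← sum_range_add_sum_Ico _ hrm, show -β - 2 + β + 1 = -1 by ring] at htotal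
  have htail : ∑ k ∈ Ico r (m + 1), cesaroA (-β - 2) k * cesaroA β (m - k) ≤ 0 :=
    sum_nonpos fun k hk => mul_nonpos_of_nonpos_of_nonneg
      (cesaroA_nonpos (by linarith) (by linarith) (by simp at hk; omega)) (cesaroA_nonneg hβ1 _)
  linarith [cesaroA_nonneg le_rfl m (β := -1)]

lemma cesaroWeight_nonneg {β : ℝ} (hβ1 : -1 ≤ β) (hβ0 : β ≤ 0) {v n : ℕ} (hvn : v ≤ n)
    (j : ℕ) : 0 ≤ cesaroWeight β n v j := by
  simpa only [cesaroWeight, ← Nat.sub_sub] using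
    sum_range_cesaroA_mul_cesaroA_nonneg hβ1 hβ0 (r := v + 1 - j) (m := n - j) (by omega)

lemma sum_cesaroWeight_le_one {β : ℝ} (hβ1 : -1 ≤ β) (hβ0 : β ≤ 0) {v n : ℕ} (hvn : v ≤ n) :
    ∑ j ∈ range (v + 1), cesaroWeight β n v j ≤ 1 := by
  have hS (j : ℕ) : ∑ q ∈ range (j + 1), cesaroA (-β - 1) q * cesaroA β (j - q) = 1 := by
    rw [sum_range_cesaroA_mul_cesaroA, show -β - 1 + β + 1 = 0 by ring, cesaroA_zero_left]
  have hexp := sum_range_cesaroA_mul_eq_sum_cesaroWeight_mul β (cesaroA (-β - 1)) v n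
  simp only [hS, mul_one] at hexp
  rw [← hexp]
  calc ∑ p ∈ range (v + 1), cesaroA β (n - p) * cesaroA (-β - 1) p
      ≤ ∑ p ∈ range (n + 1), cesaroA β (n - p) * cesaroA (-β - 1) p :=
        sum_le_sum_of_subset_of_nonneg (range_subset_range.mpr (by omega)) fun _ _ _ =>
          mul_nonneg (cesaroA_nonneg hβ1 _) (cesaroA_nonneg (by linarith) _)
    _ = 1 := by
        simp_rw [mul_comm (cesaroA β _)]
        rw [sum_range_cesaroA_mul_cesaroA, show -β - 1 + β + 1 = 0 by ring, cesaroA_zero_left]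

theorem abs_sum_range_cesaroA_mul_le {β : ℝ} (hβ1 : -1 ≤ β) (hβ0 : β ≤ 0) {v n : ℕ}
    (hvn : v ≤ n) (c : ℕ → ℝ) {M : ℝ}
    (hM : ∀ j ≤ v, |∑ q ∈ range (j + 1), c q * cesaroA β (j - q)| ≤ M) :
    |∑ p ∈ range (v + 1), cesaroA β (n - p) * c p| ≤ M := by
  have hM0 : 0 ≤ M := (abs_nonneg _).trans (hM 0 v.zero_le)
  rw [sum_range_cesaroA_mul_eq_sum_cesaroWeight_mul]
  calc _ ≤ ∑ j ∈ range (v + 1),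
        cesaroWeight β n v j * |∑ q ∈ range (j + 1), c q * cesaroA β (j - q)| := by
        refine (abs_sum_le_sum_abs _ _).trans_eq (sum_congr rfl fun j _ => ?_)
        rw [abs_mul, abs_of_nonneg (cesaroWeight_nonneg hβ1 hβ0 hvn j)]
    _ ≤ ∑ j ∈ range (v + 1), cesaroWeight β n v j * M :=
        sum_le_sum fun j hj => mul_le_mul_of_nonneg_left
          (hM j (Nat.lt_succ_iff.mp (mem_range.mp hj))) (cesaroWeight_nonneg hβ1 hβ0 hvn j)
    _ ≤ M := by
        rw [← sum_mul]
        exact mul_le_of_le_one_left hM0 (sum_cesaroWeight_le_one hβ1 hβ0 hvn)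

lemma cesaroA_mul_tCes {α : ℝ} (hα : -1 < α) (a : ℕ → ℝ) (n : ℕ) :
    cesaroA α n * tCes α a n = ∑ v ∈ Icc 1 n, cesaroA (α - 1) (n - v) * v * a v :=
  mul_inv_cancel_left₀ (cesaroA_pos hα n).ne' _

/-- For `0 < α ≤ 1` and `1 ≤ v ≤ n`,
`|∑_{p=1}^{v} A_{n-p}^{α-1} p a_p| ≤ A_v^α w_v^α`. -/
theorem inner_sum_bound (a : ℕ → ℝ) (α : ℝ) (hα0 : 0 < α) (hα1 : α ≤ 1)
    (v n : ℕ) (hv : 1 ≤ v) (hvn : v ≤ n) :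
    |∑ p ∈ Finset.Icc 1 v, cesaroA (α - 1) (n - p) * p * a p| ≤
      cesaroA α v * wCes α a v := by
  rcases hα1.eq_or_lt with rfl | hlt
  · rw [wCes, if_pos rfl, ← abs_of_pos (cesaroA_pos (by norm_num) v), ← abs_mul,
      cesaroA_mul_tCes (by norm_num), sub_self]
    simp only [cesaroA_zero_left, le_refl]
  have htw : ∀ j ≤ v, |tCes α a j| ≤ wCes α a v := by
    rw [wCes, if_neg hlt.ne]
    have hbdd := ((Set.finite_Icc 1 v).image fun j => |tCes α a j|).bddAbove
    intro j hj
    rcases Nat.eq_zero_or_pos j with rfl | hj0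
    · simpa [tCes] using (abs_nonneg _).trans (le_csSup hbdd ⟨v, ⟨hv, le_rfl⟩, rfl⟩)
    · exact le_csSup hbdd ⟨j, ⟨hj0, hj⟩, rfl⟩
  have hpart (j : ℕ) : ∑ q ∈ range (j + 1), q * a q * cesaroA (α - 1) (j - q) =
      cesaroA α j * tCes α a j := by
    rw [cesaroA_mul_tCes (by linarith), sum_Icc_one_eq_sum_range (by simp)]
    exact sum_congr rfl fun q _ => by ring
  rw [sum_Icc_one_eq_sum_range (by simp)]
  simp_rw [mul_assoc]
  refine abs_sum_range_cesaroA_mul_le (by linarith) (by linarith) hvn _ fun j hj => ?_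
  rw [hpart, abs_mul, abs_of_pos (cesaroA_pos (by linarith) j)]
  exact mul_le_mul (cesaroA_monotone hα0.le hj) (htw j hj) (abs_nonneg _)
    (cesaroA_nonneg (by linarith) v)
end

section
/- Special case $\alpha = 1$: Under the hypotheses of the main theorem with $\alpha = 1$, $\epsilon = 1$ and $\varphi_n = n^{1 - 1/k}$, the series $\sum a_n \lambda_n$ is summable $|C,1|_k$, i.e. $\sum_{n=1}^{\infty} \frac{1}{n} |t_n|^k < \infty$, where $t_n = \frac{1}{n+1}\sum_{v=1}^{n} v a_v \lambda_v$. -/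
/-!
Abel summation gives
`t_n = (n+1)⁻¹ ∑_{v ≤ n} (λ_v - λ_{v+1}) (v+1) t'_v + λ_{n+1} t'_n`,
and by convexity of `x ↦ x^k` it suffices to bound `∑ (1/n) |·|^k` for each part separately.

For the first part, Hölder's inequality with the weights `(v+1) |λ_v - λ_{v+1}| ≤ 2v |A_v|`, whose
partial sums are bounded because `X` is bounded below by a positive constant, and the interchange
of summation with `∑_{n ≥ v} 1/(n(n+1)) ≤ 1/v` reduce it to `∑ v |A_v| X_v < ∞`, since
`|t'_v|^k / v = O(X_v)`.

For the second part, `λ` is bounded, so `|λ_{n+1}|^k ≤ L^{k-1} |λ_{n+1}|`, and a second Abel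
summation against the partial sums `∑_{j ≤ n} |t'_j|^k / j = O(X_n)` leaves `∑ |A_n| X_n` and
`|λ_n| X_n = O(1)`; that `X` is almost increasing lets `X_n` be traded for `X_{n+1}` on the way.
-/

open Finset Real

lemma summable_of_sum_Icc_one_le {f : ℕ → ℝ} {c : ℝ} (hf : ∀ n, 0 ≤ f n)
    (h : ∀ m, ∑ n ∈ Icc 1 m, f n ≤ c) : Summable f := by
  refine (summable_nat_add_iff 1).1 (summable_of_sum_range_le (c := c) (fun n => hf _) fun m => ?_)
  rw [range_eq_Ico, sum_Ico_add', Ico_add_one_right_eq_Icc]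
  simpa using h m

lemma rpow_sum_mul_le {ι : Type*} (s : Finset ι) {k : ℝ} (hk : 1 ≤ k) (w f : ι → ℝ)
    (hw : ∀ i, 0 ≤ w i) (hf : ∀ i, 0 ≤ f i) :
    (∑ i ∈ s, w i * f i) ^ k ≤ (∑ i ∈ s, w i) ^ (k - 1) * ∑ i ∈ s, w i * f i ^ k := by
  have hk0 : k ≠ 0 := by positivity
  have hW : 0 ≤ ∑ i ∈ s, w i := sum_nonneg fun i _ => hw i
  have hWf : 0 ≤ ∑ i ∈ s, w i * f i ^ k :=
    sum_nonneg fun i _ => mul_nonneg (hw i) (rpow_nonneg (hf i) k)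
  calc (∑ i ∈ s, w i * f i) ^ k
      ≤ ((∑ i ∈ s, w i) ^ (1 - k⁻¹) * (∑ i ∈ s, w i * f i ^ k) ^ k⁻¹) ^ k := by
        gcongr
        · exact sum_nonneg fun i _ => mul_nonneg (hw i) (hf i)
        · exact inner_le_weight_mul_Lp_of_nonneg s hk w f hw hf
    _ = (∑ i ∈ s, w i) ^ (k - 1) * ∑ i ∈ s, w i * f i ^ k := by
        rw [mul_rpow (by positivity) (by positivity), ← rpow_mul hW, ← rpow_mul hWf,
          sub_mul, one_mul, inv_mul_cancel₀ hk0, rpow_one]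

lemma abs_rpow_le_two_rpow_mul_add {x u v k : ℝ} (hu : 0 ≤ u) (hv : 0 ≤ v) (hk : 1 ≤ k)
    (hx : |x| ≤ u + v) : |x| ^ k ≤ 2 ^ (k - 1) * (u ^ k + v ^ k) := by
  lift u to NNReal using hu
  lift v to NNReal using hv
  calc |x| ^ k ≤ ((u + v : NNReal) : ℝ) ^ k := by gcongr; exact_mod_cast hx
    _ ≤ _ := by exact_mod_cast NNReal.rpow_add_le_mul_rpow_add_rpow u v hk

lemma mul_rpow_le_rpow_sub_one_mul {x z L k : ℝ} (hx : 0 ≤ x) (hxL : x ≤ L) (hz : 0 ≤ z)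
    (hk : 1 ≤ k) : (x * z) ^ k ≤ L ^ (k - 1) * (x * z ^ k) := by
  rw [mul_rpow hx hz, ← mul_assoc]
  gcongr
  rcases hx.eq_or_lt with rfl | hx
  · simp [zero_rpow (by positivity : k ≠ 0)]
  calc x ^ k = x ^ (k - 1) * x := by rw [← rpow_add_one hx.ne', sub_add_cancel]
    _ ≤ L ^ (k - 1) * x := by gcongr

lemma sum_Icc_inv_mul_succ_le {v : ℕ} (hv : 0 < v) (m : ℕ) :
    ∑ n ∈ Icc v m, ((n : ℝ) * (n + 1))⁻¹ ≤ (v : ℝ)⁻¹ := by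
  rcases lt_or_ge m v with hmv | hvm
  · simp [Icc_eq_empty_of_lt hmv]
  have htel : ∀ n ∈ Icc v m, ((n : ℝ) * (n + 1))⁻¹ = -((n + 1 : ℕ) : ℝ)⁻¹ - -(n : ℝ)⁻¹ := by
    intro n hn
    have : (0 : ℝ) < n := by have := (mem_Icc.1 hn).1; exact_mod_cast hv.trans_le this
    push_cast
    field_simp
    ring
  rw [sum_congr rfl htel, sum_Icc_sub hvm fun n : ℕ => -(n : ℝ)⁻¹]
  simp only [sub_neg_eq_add, neg_add_le_iff_le_add, le_add_iff_nonneg_left]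
  positivity

lemma sum_Icc_one_by_parts (c b : ℕ → ℝ) (m : ℕ) :
    ∑ n ∈ Icc 1 m, c n * b n =
      ∑ n ∈ Icc 1 m, (c n - c (n + 1)) * ∑ j ∈ Icc 1 n, b j +
        c (m + 1) * ∑ j ∈ Icc 1 m, b j := by
  induction m with
  | zero => simp
  | succ m ih =>
    simp only [sum_Icc_succ_top (Nat.le_add_left 1 m), ih]
    ring

lemma sum_Icc_one_mul_le (c b β : ℕ → ℝ) (hb : ∀ n, 0 ≤ b n)
    (hβ : ∀ n, ∑ j ∈ Icc 1 n, b j ≤ β n) (m : ℕ) :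
    ∑ n ∈ Icc 1 m, c n * b n ≤
      ∑ n ∈ Icc 1 m, |c n - c (n + 1)| * β n + |c (m + 1)| * β m := by
  have key : ∀ (x : ℝ) n, x * ∑ j ∈ Icc 1 n, b j ≤ |x| * β n := fun x n =>
    calc x * ∑ j ∈ Icc 1 n, b j ≤ |x| * ∑ j ∈ Icc 1 n, b j :=
          mul_le_mul_of_nonneg_right (le_abs_self x) (sum_nonneg fun j _ => hb j)
      _ ≤ |x| * β n := mul_le_mul_of_nonneg_left (hβ n) (abs_nonneg x)
  rw [sum_Icc_one_by_parts]
  exact add_le_add (sum_le_sum fun n _ => key _ n) (key _ m)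

noncomputable def cesaroMean (b : ℕ → ℝ) (n : ℕ) : ℝ := ((n : ℝ) + 1)⁻¹ * ∑ v ∈ Icc 1 n, b v

lemma sum_Icc_one_eq_mul_cesaroMean (b : ℕ → ℝ) (n : ℕ) :
    ∑ v ∈ Icc 1 n, b v = ((n : ℝ) + 1) * cesaroMean b n := by
  rw [cesaroMean, mul_inv_cancel_left₀ (by positivity)]

lemma abs_cesaroMean_mul_le (b lam : ℕ → ℝ) (n : ℕ) :
    |cesaroMean (fun v => b v * lam v) n| ≤
      ((n : ℝ) + 1)⁻¹ * ∑ v ∈ Icc 1 n, |lam v - lam (v + 1)| * ((v : ℝ) + 1) * |cesaroMean b v| +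
        |lam (n + 1)| * |cesaroMean b n| := by
  have hn : (0 : ℝ) < n + 1 := by positivity
  have habel : ∑ v ∈ Icc 1 n, b v * lam v =
      ∑ v ∈ Icc 1 n, (lam v - lam (v + 1)) * (((v : ℝ) + 1) * cesaroMean b v) +
        lam (n + 1) * (((n : ℝ) + 1) * cesaroMean b n) := by
    rw [sum_congr rfl fun v _ => mul_comm (b v) (lam v), sum_Icc_one_by_parts]
    simp only [sum_Icc_one_eq_mul_cesaroMean b]
  have hsum : |∑ v ∈ Icc 1 n, b v * lam v| ≤
      ∑ v ∈ Icc 1 n, |lam v - lam (v + 1)| * ((v : ℝ) + 1) * |cesaroMean b v| +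
        ((n : ℝ) + 1) * (|lam (n + 1)| * |cesaroMean b n|) := by
    rw [habel]
    refine (abs_add_le _ _).trans (add_le_add ((abs_sum_le_sum_abs _ _).trans_eq ?_) ?_)
    · refine sum_congr rfl fun v _ => ?_
      rw [abs_mul, abs_mul, abs_of_pos (by positivity : (0 : ℝ) < v + 1), mul_assoc]
    · rw [abs_mul, abs_mul, abs_of_pos hn, mul_left_comm]
  rw [cesaroMean, abs_mul, abs_of_pos (inv_pos.2 hn)]
  calc ((n : ℝ) + 1)⁻¹ * |∑ v ∈ Icc 1 n, b v * lam v|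
      ≤ ((n : ℝ) + 1)⁻¹ * (∑ v ∈ Icc 1 n, |lam v - lam (v + 1)| * ((v : ℝ) + 1) * |cesaroMean b v| +
        ((n : ℝ) + 1) * (|lam (n + 1)| * |cesaroMean b n|)) := by gcongr
    _ = _ := by rw [mul_add, inv_mul_cancel_left₀ hn.ne']

lemma inv_mul_rpow_abs_cesaroMean_mul_le (b lam : ℕ → ℝ) {k : ℝ} (hk : 1 ≤ k) (n : ℕ) :
    1 / (n : ℝ) * |cesaroMean (fun v => b v * lam v) n| ^ k ≤
      2 ^ (k - 1) * (1 / (n : ℝ) * (((n : ℝ) + 1)⁻¹ *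
          ∑ v ∈ Icc 1 n, |lam v - lam (v + 1)| * ((v : ℝ) + 1) * |cesaroMean b v|) ^ k +
        1 / (n : ℝ) * (|lam (n + 1)| * |cesaroMean b n|) ^ k) := by
  have hsplit := abs_rpow_le_two_rpow_mul_add (by positivity) (by positivity) hk
    (abs_cesaroMean_mul_le b lam n)
  calc _ ≤ 1 / (n : ℝ) * (2 ^ (k - 1) * ((((n : ℝ) + 1)⁻¹ *
          ∑ v ∈ Icc 1 n, |lam v - lam (v + 1)| * ((v : ℝ) + 1) * |cesaroMean b v|) ^ k +
        (|lam (n + 1)| * |cesaroMean b n|) ^ k)) := by gcongr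
    _ = _ := by ring

lemma sum_Icc_inv_mul_rpow_weighted_mean_le {k W : ℝ} (hk : 1 ≤ k) {μ y : ℕ → ℝ}
    (hμ : ∀ v, 0 ≤ μ v) (hy : ∀ v, 0 ≤ y v) (hW : ∀ n, ∑ v ∈ Icc 1 n, μ v ≤ W) (m : ℕ) :
    ∑ n ∈ Icc 1 m, 1 / (n : ℝ) * (((n : ℝ) + 1)⁻¹ * ∑ v ∈ Icc 1 n, μ v * y v) ^ k ≤
      W ^ (k - 1) * ∑ v ∈ Icc 1 m, μ v * (1 / (v : ℝ) * y v ^ k) := by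
  have hW0 : 0 ≤ W := by simpa using hW 0
  have hpt : ∀ n ∈ Icc 1 m, 1 / (n : ℝ) * (((n : ℝ) + 1)⁻¹ * ∑ v ∈ Icc 1 n, μ v * y v) ^ k ≤
      W ^ (k - 1) * ∑ v ∈ Icc 1 n, ((n : ℝ) * (n + 1))⁻¹ * (μ v * y v ^ k) := by
    intro n _
    have hS : 0 ≤ ∑ v ∈ Icc 1 n, μ v * y v := sum_nonneg fun v _ => mul_nonneg (hμ v) (hy v)
    have hinv : (((n : ℝ) + 1)⁻¹) ^ k ≤ ((n : ℝ) + 1)⁻¹ := by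
      simpa using rpow_le_rpow_of_exponent_ge (by positivity)
        (inv_le_one_of_one_le₀ (by simp)) hk
    have hjensen : (∑ v ∈ Icc 1 n, μ v * y v) ^ k ≤ W ^ (k - 1) * ∑ v ∈ Icc 1 n, μ v * y v ^ k :=
      (rpow_sum_mul_le _ hk μ y hμ hy).trans <| mul_le_mul_of_nonneg_right
        (rpow_le_rpow (sum_nonneg fun v _ => hμ v) (hW n) (by linarith))
        (sum_nonneg fun v _ => mul_nonneg (hμ v) (rpow_nonneg (hy v) k))
    rw [mul_rpow (by positivity) hS, ← mul_sum, mul_inv, one_div]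
    calc (n : ℝ)⁻¹ * ((((n : ℝ) + 1)⁻¹) ^ k * (∑ v ∈ Icc 1 n, μ v * y v) ^ k)
        ≤ (n : ℝ)⁻¹ * (((n : ℝ) + 1)⁻¹ * (W ^ (k - 1) * ∑ v ∈ Icc 1 n, μ v * y v ^ k)) :=
          mul_le_mul_of_nonneg_left (mul_le_mul hinv hjensen (rpow_nonneg hS k) (by positivity))
            (by positivity)
      _ = _ := by ring
  calc _ ≤ ∑ n ∈ Icc 1 m, W ^ (k - 1) * ∑ v ∈ Icc 1 n, ((n : ℝ) * (n + 1))⁻¹ * (μ v * y v ^ k) :=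
        sum_le_sum hpt
    _ = W ^ (k - 1) * ∑ v ∈ Icc 1 m, (∑ n ∈ Icc v m, ((n : ℝ) * (n + 1))⁻¹) * (μ v * y v ^ k) := by
        rw [← mul_sum, sum_comm' (t' := Icc 1 m) (s' := fun v => Icc v m)]
        · simp only [sum_mul]
        · intro n v; simp only [mem_Icc]; omega
    _ ≤ W ^ (k - 1) * ∑ v ∈ Icc 1 m, (v : ℝ)⁻¹ * (μ v * y v ^ k) := by
        gcongr with v hv
        · exact mul_nonneg (hμ v) (rpow_nonneg (hy v) k)
        · exact sum_Icc_inv_mul_succ_le (mem_Icc.1 hv).1 m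
    _ = _ := by simp only [one_div, mul_left_comm]

namespace AlmostIncreasing

variable {X : ℕ → ℝ}

lemma exists_pos_le (hX : AlmostIncreasing X) : ∃ x₀ > 0, ∀ n, x₀ ≤ X n := by
  obtain ⟨c, A, _, hA, -, hc, hmono, hb⟩ := hX
  exact ⟨A * c 0, mul_pos hA (hc 0), fun n =>
    (mul_le_mul_of_nonneg_left (hmono.monotone n.zero_le) hA.le).trans (hb n).1⟩

lemma pos (hX : AlmostIncreasing X) (n : ℕ) : 0 < X n := by
  obtain ⟨x₀, hx₀, hle⟩ := hX.exists_pos_le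
  exact hx₀.trans_le (hle n)

lemma exists_le_mul (hX : AlmostIncreasing X) : ∃ K ≥ 0, ∀ m n, m ≤ n → X m ≤ K * X n := by
  obtain ⟨c, A, B, hA, hB, -, hmono, hb⟩ := hX
  refine ⟨B / A, by positivity, fun m n hmn => ?_⟩
  calc X m ≤ B * c m := (hb m).2
    _ ≤ B * c n := by gcongr; exact hmono.monotone hmn
    _ = B / A * (A * c n) := by field_simp
    _ ≤ B / A * X n := by gcongr; exact (hb n).1

lemma exists_abs_le {lam : ℕ → ℝ} (hX : AlmostIncreasing X)
    (hlamX : ∃ C, ∀ n, |lam n| * X n ≤ C) : ∃ L, ∀ n, |lam n| ≤ L := by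
  obtain ⟨x₀, hx₀, hle⟩ := hX.exists_pos_le
  obtain ⟨C, hC⟩ := hlamX
  exact ⟨C / x₀, fun n => (le_div_iff₀ hx₀).2
    ((mul_le_mul_of_nonneg_left (hle n) (abs_nonneg _)).trans (hC n))⟩

/-- Summability in `ℝ` is unconditional, hence absolute. -/
lemma summable_mul_abs {A : ℕ → ℝ} (hX : AlmostIncreasing X)
    (hAX : Summable fun n : ℕ => (n : ℝ) * A n * X n) :
    Summable fun n : ℕ => (n : ℝ) * |A n| * X n := by
  refine hAX.abs.congr fun n => ?_
  rw [abs_mul, abs_mul, Nat.abs_cast, abs_of_pos (hX.pos n)]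

lemma exists_sum_mul_abs_le {A : ℕ → ℝ} (hX : AlmostIncreasing X)
    (hAX : Summable fun n : ℕ => (n : ℝ) * A n * X n) :
    ∃ M, ∀ s : Finset ℕ, ∑ n ∈ s, (n : ℝ) * |A n| * X n ≤ M :=
  ⟨_, fun s => (hX.summable_mul_abs hAX).sum_le_tsum s fun n _ => by
    have := hX.pos n; positivity⟩

end AlmostIncreasing

section Estimates

variable {X A lam y : ℕ → ℝ} {k C : ℝ}

lemma exists_sum_Icc_rpow_weighted_mean_le (hX : AlmostIncreasing X)
    (hAX : Summable fun n : ℕ => (n : ℝ) * A n * X n)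
    (hΔ : ∀ n, |lam n - lam (n + 1)| ≤ |A n|) (hk : 1 ≤ k) (hy : ∀ n, 0 ≤ y n) (hC : 0 ≤ C)
    (hpartial : ∀ n : ℕ, ∑ j ∈ Icc 1 n, 1 / (j : ℝ) * y j ^ k ≤ C * X n) :
    ∃ B, ∀ m : ℕ, ∑ n ∈ Icc 1 m, 1 / (n : ℝ) * (((n : ℝ) + 1)⁻¹ *
      ∑ v ∈ Icc 1 n, |lam v - lam (v + 1)| * ((v : ℝ) + 1) * y v) ^ k ≤ B := by
  obtain ⟨x₀, hx₀, hle⟩ := hX.exists_pos_le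
  obtain ⟨M, hM⟩ := hX.exists_sum_mul_abs_le hAX
  have hM0 : 0 ≤ M := by simpa using hM ∅
  have hweight : ∀ v : ℕ, 1 ≤ v →
      |lam v - lam (v + 1)| * ((v : ℝ) + 1) ≤ 2 * ((v : ℝ) * |A v|) := by
    intro v hv
    have : (1 : ℝ) ≤ v := by exact_mod_cast hv
    nlinarith [hΔ v, abs_nonneg (lam v - lam (v + 1))]
  have hterm : ∀ v : ℕ, 1 ≤ v → 1 / (v : ℝ) * y v ^ k ≤ C * X v := fun v hv =>
    (single_le_sum (f := fun j : ℕ => 1 / (j : ℝ) * y j ^ k)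
      (fun j _ => by have := hy j; positivity) (mem_Icc.2 ⟨hv, le_rfl⟩)).trans (hpartial v)
  refine ⟨(2 / x₀ * M) ^ (k - 1) * (2 * C * M), fun m => ?_⟩
  refine (sum_Icc_inv_mul_rpow_weighted_mean_le (W := 2 / x₀ * M) hk (fun v => by positivity) hy
    (fun n => ?_) m).trans ?_
  · calc ∑ v ∈ Icc 1 n, |lam v - lam (v + 1)| * ((v : ℝ) + 1)
        ≤ ∑ v ∈ Icc 1 n, 2 / x₀ * ((v : ℝ) * |A v| * X v) := sum_le_sum fun v hv => by
          calc _ ≤ 2 * ((v : ℝ) * |A v|) := hweight v (mem_Icc.1 hv).1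
            _ = 2 / x₀ * ((v : ℝ) * |A v| * x₀) := by field_simp
            _ ≤ _ := by gcongr; exact hle v
      _ ≤ 2 / x₀ * M := by rw [← mul_sum]; gcongr; exact hM _
  · gcongr
    calc ∑ v ∈ Icc 1 m, |lam v - lam (v + 1)| * ((v : ℝ) + 1) * (1 / (v : ℝ) * y v ^ k)
        ≤ ∑ v ∈ Icc 1 m, 2 * C * ((v : ℝ) * |A v| * X v) := sum_le_sum fun v hv => by
          have := hy v
          calc _ ≤ 2 * ((v : ℝ) * |A v|) * (C * X v) :=
                mul_le_mul (hweight v (mem_Icc.1 hv).1) (hterm v (mem_Icc.1 hv).1)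
                  (by positivity) (by positivity)
            _ = _ := by ring
      _ ≤ 2 * C * M := by rw [← mul_sum]; gcongr; exact hM _

lemma exists_sum_Icc_abs_succ_mul_le {b : ℕ → ℝ} (hX : AlmostIncreasing X)
    (hlamX : ∃ C, ∀ n, |lam n| * X n ≤ C) (hAX : Summable fun n : ℕ => (n : ℝ) * A n * X n)
    (hΔ : ∀ n, |lam n - lam (n + 1)| ≤ |A n|) (hb : ∀ n, 0 ≤ b n) (hC : 0 ≤ C)
    (hpartial : ∀ n : ℕ, ∑ j ∈ Icc 1 n, b j ≤ C * X n) :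
    ∃ B, ∀ m : ℕ, ∑ n ∈ Icc 1 m, |lam (n + 1)| * b n ≤ B := by
  obtain ⟨K, hK0, hK⟩ := hX.exists_le_mul
  obtain ⟨M, hM⟩ := hX.exists_sum_mul_abs_le hAX
  obtain ⟨C₀, hC₀⟩ := hlamX
  have hstep : ∀ n : ℕ, |(|lam (n + 1)| - |lam (n + 1 + 1)|)| * (C * X n) ≤
      C * K * (((n + 1 : ℕ) : ℝ) * |A (n + 1)| * X (n + 1)) := by
    intro n
    have hA : |(|lam (n + 1)| - |lam (n + 1 + 1)|)| ≤ ((n + 1 : ℕ) : ℝ) * |A (n + 1)| :=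
      (abs_abs_sub_abs_le_abs_sub _ _).trans ((hΔ (n + 1)).trans
        (le_mul_of_one_le_left (abs_nonneg _) (by simp)))
    calc _ ≤ ((n + 1 : ℕ) : ℝ) * |A (n + 1)| * (C * (K * X (n + 1))) := by
          gcongr
          · exact mul_nonneg hC (hX.pos n).le
          · exact hK n (n + 1) n.le_succ
      _ = _ := by ring
  have hlast : ∀ m : ℕ, |(|lam (m + 1 + 1)|)| * (C * X m) ≤ C * K * C₀ := by
    intro m
    calc _ ≤ |lam (m + 1 + 1)| * (C * (K * X (m + 1 + 1))) := by
          rw [abs_abs]; gcongr; exact hK m _ (by omega)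
      _ = C * K * (|lam (m + 1 + 1)| * X (m + 1 + 1)) := by ring
      _ ≤ C * K * C₀ := by gcongr; exact hC₀ _
  refine ⟨C * K * (M + C₀), fun m => ?_⟩
  calc _ ≤ ∑ n ∈ Icc 1 m, |(|lam (n + 1)| - |lam (n + 1 + 1)|)| * (C * X n) +
        |(|lam (m + 1 + 1)|)| * (C * X m) :=
        sum_Icc_one_mul_le (fun n => |lam (n + 1)|) b _ hb hpartial m
    _ ≤ C * K * ∑ n ∈ (Icc 1 m).map (addRightEmbedding 1), (n : ℝ) * |A n| * X n + C * K * C₀ := by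
        rw [sum_map, mul_sum]
        exact add_le_add (sum_le_sum fun n _ => hstep n) (hlast m)
    _ ≤ C * K * (M + C₀) := by
        rw [mul_add]; gcongr; exact hM _

lemma exists_sum_Icc_rpow_abs_succ_mul_le (hX : AlmostIncreasing X)
    (hlamX : ∃ C, ∀ n, |lam n| * X n ≤ C) (hAX : Summable fun n : ℕ => (n : ℝ) * A n * X n)
    (hΔ : ∀ n, |lam n - lam (n + 1)| ≤ |A n|) (hk : 1 ≤ k) (hy : ∀ n, 0 ≤ y n) (hC : 0 ≤ C)
    (hpartial : ∀ n : ℕ, ∑ j ∈ Icc 1 n, 1 / (j : ℝ) * y j ^ k ≤ C * X n) :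
    ∃ B, ∀ m : ℕ, ∑ n ∈ Icc 1 m, 1 / (n : ℝ) * (|lam (n + 1)| * y n) ^ k ≤ B := by
  obtain ⟨L, hL⟩ := hX.exists_abs_le hlamX
  have hL0 : 0 ≤ L := (abs_nonneg _).trans (hL 0)
  obtain ⟨B, hB⟩ := exists_sum_Icc_abs_succ_mul_le hX hlamX hAX hΔ
    (fun n => by have := hy n; positivity) hC hpartial
  refine ⟨L ^ (k - 1) * B, fun m => ?_⟩
  calc _ ≤ ∑ n ∈ Icc 1 m, L ^ (k - 1) * (|lam (n + 1)| * (1 / (n : ℝ) * y n ^ k)) :=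
        sum_le_sum fun n _ => by
          have := mul_rpow_le_rpow_sub_one_mul (abs_nonneg _) (hL (n + 1)) (hy n) hk
          calc _ ≤ 1 / (n : ℝ) * (L ^ (k - 1) * (|lam (n + 1)| * y n ^ k)) := by gcongr
            _ = _ := by ring
    _ ≤ L ^ (k - 1) * B := by rw [← mul_sum]; gcongr; exact hB m

end Estimates

theorem summable_C1k_general (X A lam a : ℕ → ℝ) (k : ℝ)
    (hX : AlmostIncreasing X)
    (hlamX : ∃ C : ℝ, ∀ n, |lam n| * X n ≤ C)
    (hAX : Summable (fun n : ℕ => (n : ℝ) * A n * X n))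
    (hΔ : ∀ n, |lam n - lam (n + 1)| ≤ |A n|)
    (hk : 1 ≤ k)
    (ht' : ∃ C : ℝ, ∀ m : ℕ, 1 ≤ m →
      (∑ n ∈ Finset.Icc 1 m, (1 / (n : ℝ)) *
        |((n : ℝ) + 1)⁻¹ * ∑ v ∈ Finset.Icc 1 n, (v : ℝ) * a v| ^ k) ≤ C * X m) :
    Summable (fun n : ℕ => (1 / (n : ℝ)) *
      |((n : ℝ) + 1)⁻¹ * ∑ v ∈ Finset.Icc 1 n, (v : ℝ) * a v * lam v| ^ k) := by
  obtain ⟨C, hC⟩ := ht'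
  set y : ℕ → ℝ := fun n => |cesaroMean (fun v => (v : ℝ) * a v) n|
  have hC0 : 0 ≤ C := nonneg_of_mul_nonneg_left
    ((sum_nonneg fun n _ => by positivity).trans (hC 1 le_rfl)) (hX.pos 1)
  have hpartial : ∀ n : ℕ, ∑ j ∈ Icc 1 n, 1 / (j : ℝ) * y j ^ k ≤ C * X n
    | 0 => by simpa using mul_nonneg hC0 (hX.pos 0).le
    | n + 1 => hC (n + 1) n.succ_pos
  obtain ⟨B₁, hB₁⟩ :=
    exists_sum_Icc_rpow_weighted_mean_le hX hAX hΔ hk (fun n => abs_nonneg _) hC0 hpartial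
  obtain ⟨B₂, hB₂⟩ :=
    exists_sum_Icc_rpow_abs_succ_mul_le hX hlamX hAX hΔ hk (fun n => abs_nonneg _) hC0 hpartial
  refine summable_of_sum_Icc_one_le (c := 2 ^ (k - 1) * (B₁ + B₂)) (fun n => by positivity)
    fun m => (sum_le_sum fun n _ => inv_mul_rpow_abs_cesaroMean_mul_le _ lam hk n).trans ?_
  rw [← mul_sum, sum_add_distrib]
  gcongr
  exacts [hB₁ m, hB₂ m]

/-- Special case `α = 1`, `ε = 1`, `φ_n = n^{1-1/k}`: under the hypotheses of the main
theorem, `∑ a_n λ_n` is summable `|C,1|_k`, i.e. `∑ (1/n) |t_n|^k < ∞` where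
`t_n = (n+1)⁻¹ ∑_{v=1}^n v a_v λ_v`. -/
theorem summable_C1k (X A δ lam a : ℕ → ℝ) (k : ℝ)
    (hX : AlmostIncreasing X)
    (hlamX : ∃ C : ℝ, ∀ n, |lam n| * X n ≤ C)
    (hδpos : ∀ n, 0 < δ n) (hqm : DeltaQuasiMonotone A δ)
    (hAX : Summable (fun n : ℕ => (n : ℝ) * A n * X n))
    (hΔ : ∀ n, |lam n - lam (n + 1)| ≤ |A n|)
    (hk : 1 ≤ k)
    (ht' : ∃ C : ℝ, ∀ m : ℕ, 1 ≤ m →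
      (∑ n ∈ Finset.Icc 1 m, (1 / (n : ℝ)) *
        |((n : ℝ) + 1)⁻¹ * ∑ v ∈ Finset.Icc 1 n, (v : ℝ) * a v| ^ k) ≤ C * X m) :
    Summable (fun n : ℕ => (1 / (n : ℝ)) *
      |((n : ℝ) + 1)⁻¹ * ∑ v ∈ Finset.Icc 1 n, (v : ℝ) * a v * lam v| ^ k) :=
  summable_C1k_general X A lam a k hX hlamX hAX hΔ hk ht'
end

section
/- Summation by parts estimate: Let $(X_n)$ be an almost increasing positive sequence, let $(b_n)$ be a sequence of nonnegative reals with $\sum_{v=1}^{m} b_v = O(X_m)$, let $(A_n)$ be a $\delta$-quasi-monotone sequence with $\sum n A_n X_n$ convergent. Then $\sum_{v=1}^{m} v |A_v| b_v = O(1)$ as $m \to \infty$. -/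
open Finset

/- A nonnegative term is at most the partial sum containing it, so `∑_{v ≤ m} b_v ≤ C X_m`
already gives `b_v ≤ C X_v`; combined with the absolute convergence of the real series
`∑ n A_n X_n`, the sum `∑ v |A_v| b_v` is dominated termwise by `|C| ∑ |v A_v X_v|`. -/

lemma le_mul_of_sum_Icc_le_mul {b X : ℕ → ℝ} {C : ℝ} (hb : ∀ n, 0 ≤ b n)
    (hbX : ∀ m, 1 ≤ m → ∑ v ∈ Icc 1 m, b v ≤ C * X m) {v : ℕ} (hv : 1 ≤ v) :
    b v ≤ C * X v :=
  (single_le_sum (fun n _ => hb n) (mem_Icc.mpr ⟨hv, le_rfl⟩)).trans (hbX v hv)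

lemma mul_abs_mul_le_abs_mul_abs {n a b x C : ℝ} (hn : 0 ≤ n) (hb : b ≤ C * x) :
    n * |a| * b ≤ |C| * |n * a * x| :=
  calc n * |a| * b ≤ n * |a| * |C * x| :=
        mul_le_mul_of_nonneg_left (hb.trans (le_abs_self _)) (by positivity)
    _ = |C| * |n * a * x| := by rw [abs_mul, abs_mul, abs_mul, abs_of_nonneg hn]; ring

theorem abel_estimate_first_general (X A b : ℕ → ℝ)
    (hb : ∀ n, 0 ≤ b n)
    (hbX : ∃ C : ℝ, ∀ m : ℕ, 1 ≤ m → (∑ v ∈ Finset.Icc 1 m, b v) ≤ C * X m)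
    (hAX : Summable (fun n : ℕ => (n : ℝ) * A n * X n)) :
    ∃ D : ℝ, ∀ m : ℕ, (∑ v ∈ Finset.Icc 1 m, (v : ℝ) * |A v| * b v) ≤ D := by
  obtain ⟨C, hC⟩ := hbX
  refine ⟨|C| * ∑' n : ℕ, |(n : ℝ) * A n * X n|, fun m => ?_⟩
  calc ∑ v ∈ Icc 1 m, (v : ℝ) * |A v| * b v
      ≤ ∑ v ∈ Icc 1 m, |C| * |(v : ℝ) * A v * X v| := sum_le_sum fun v hv =>
        mul_abs_mul_le_abs_mul_abs v.cast_nonneg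
          (le_mul_of_sum_Icc_le_mul hb hC (mem_Icc.mp hv).1)
    _ = |C| * ∑ v ∈ Icc 1 m, |(v : ℝ) * A v * X v| := (mul_sum _ _ _).symm
    _ ≤ |C| * ∑' n : ℕ, |(n : ℝ) * A n * X n| :=
        mul_le_mul_of_nonneg_left (hAX.abs.sum_le_tsum _ fun _ _ => abs_nonneg _) (abs_nonneg C)

/-- Summation-by-parts estimate: if `X` is almost increasing, `b ≥ 0` with
`∑_{v≤m} b_v = O(X_m)`, and `A` is `δ`-quasi-monotone with `∑ n A_n X_n` and
`∑ n δ_n X_n` convergent, then `∑_{v=1}^m v |A_v| b_v = O(1)`. -/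
theorem abel_estimate_first (X A δ b : ℕ → ℝ) (hX : AlmostIncreasing X)
    (hb : ∀ n, 0 ≤ b n)
    (hbX : ∃ C : ℝ, ∀ m : ℕ, 1 ≤ m → (∑ v ∈ Finset.Icc 1 m, b v) ≤ C * X m)
    (hδpos : ∀ n, 0 < δ n) (hqm : DeltaQuasiMonotone A δ)
    (hAX : Summable (fun n : ℕ => (n : ℝ) * A n * X n))
    (hδX : Summable (fun n : ℕ => (n : ℝ) * δ n * X n)) :
    ∃ D : ℝ, ∀ m : ℕ, (∑ v ∈ Finset.Icc 1 m, (v : ℝ) * |A v| * b v) ≤ D :=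
  abel_estimate_first_general X A b hb hbX hAX
end

section
/- Summation by parts estimate for the second term: Let $(X_n)$ be an almost increasing positive sequence, $(\lambda_n)$ a sequence with $|\lambda_n| X_n = O(1)$ and $\sum_{n=1}^{\infty} |\Delta \lambda_n| X_n < \infty$, and $(b_n)$ a nonnegative sequence with $\sum_{v=1}^{m} b_v = O(X_m)$. Then for $k \geq 1$, $\sum_{n=1}^{m} |\lambda_n|^k b_n = O(1)$ as $m \to \infty$. -/
open Finset

theorem AlmostIncreasing.exists_pos_le_s13 {X : ℕ → ℝ} (hX : AlmostIncreasing X) :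
    ∃ a > 0, ∀ n, a ≤ X n := by
  obtain ⟨c, A, B, hA, -, hc, hc_mono, hcX⟩ := hX
  refine ⟨A * c 0, mul_pos hA (hc 0), fun n => ?_⟩
  calc A * c 0 ≤ A * c n := by gcongr; exact hc_mono.monotone n.zero_le
    _ ≤ X n := (hcX n).1

theorem Real.rpow_le_rpow_sub_one_mul {t M k : ℝ} (ht : 0 ≤ t) (htM : t ≤ M) (hk : 1 ≤ k) :
    t ^ k ≤ M ^ (k - 1) * t := by
  calc t ^ k = t ^ (k - 1) * t := by
        rw [← Real.rpow_add_one' ht (by linarith), sub_add_cancel]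
    _ ≤ M ^ (k - 1) * t := by gcongr

theorem sum_Icc_mul_eq_abel {R : Type*} [CommRing R] (u b : ℕ → R) (m : ℕ) :
    ∑ n ∈ Icc 1 m, u n * b n =
      u m * ∑ v ∈ Icc 1 m, b v + ∑ n ∈ range m, (u n - u (n + 1)) * ∑ v ∈ Icc 1 n, b v := by
  induction m with
  | zero => simp
  | succ m ih =>
    rw [sum_Icc_succ_top m.succ_pos, sum_Icc_succ_top m.succ_pos, sum_range_succ, ih]
    ring

theorem sum_Icc_abs_mul_le_of_sum_Icc_le {lam b X : ℕ → ℝ} {C : ℝ} (hb : ∀ n, 0 ≤ b n)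
    (hB : ∀ m, ∑ v ∈ Icc 1 m, b v ≤ C * X m) (m : ℕ) :
    ∑ n ∈ Icc 1 m, |lam n| * b n ≤
      C * (|lam m| * X m + ∑ n ∈ range m, |lam n - lam (n + 1)| * X n) := by
  have hB_nonneg (n : ℕ) : 0 ≤ ∑ v ∈ Icc 1 n, b v := sum_nonneg fun v _ => hb v
  have hΔ (n : ℕ) : (|lam n| - |lam (n + 1)|) * ∑ v ∈ Icc 1 n, b v ≤
      C * (|lam n - lam (n + 1)| * X n) :=
    calc (|lam n| - |lam (n + 1)|) * ∑ v ∈ Icc 1 n, b v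
        ≤ |lam n - lam (n + 1)| * ∑ v ∈ Icc 1 n, b v := by
          gcongr
          · exact hB_nonneg n
          · exact abs_sub_abs_le_abs_sub _ _
      _ ≤ |lam n - lam (n + 1)| * (C * X n) := by gcongr; exact hB n
      _ = C * (|lam n - lam (n + 1)| * X n) := by ring
  rw [sum_Icc_mul_eq_abel, mul_add, mul_sum (range m)]
  refine add_le_add ?_ (sum_le_sum fun n _ => hΔ n)
  calc |lam m| * ∑ v ∈ Icc 1 m, b v ≤ |lam m| * (C * X m) := by gcongr; exact hB m
    _ = C * (|lam m| * X m) := by ring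

theorem exists_nonneg_sum_Icc_le_mul {b X : ℕ → ℝ} (hX : ∀ n, 0 ≤ X n)
    (h : ∃ C : ℝ, ∀ m, 1 ≤ m → ∑ v ∈ Icc 1 m, b v ≤ C * X m) :
    ∃ C ≥ 0, ∀ m, ∑ v ∈ Icc 1 m, b v ≤ C * X m := by
  obtain ⟨C, hC⟩ := h
  refine ⟨max C 0, le_max_right C 0, fun m => ?_⟩
  rcases m.eq_zero_or_pos with rfl | hm
  · simpa using mul_nonneg (le_max_right C 0) (hX 0)
  · exact (hC m hm).trans (by gcongr; exacts [hX m, le_max_left C 0])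

/-- If `X` is almost increasing, `|λ_n| X_n = O(1)`, `∑ |Δλ_n| X_n < ∞`, and `b ≥ 0` with
`∑_{v≤m} b_v = O(X_m)`, then for `k ≥ 1`, `∑_{n≤m} |λ_n|^k b_n = O(1)`. -/
theorem abel_estimate_second (X lam b : ℕ → ℝ) (k : ℝ) (hX : AlmostIncreasing X)
    (hlamX : ∃ C : ℝ, ∀ n, |lam n| * X n ≤ C)
    (hΔ : Summable (fun n : ℕ => |lam n - lam (n + 1)| * X n))
    (hb : ∀ n, 0 ≤ b n)
    (hbX : ∃ C : ℝ, ∀ m : ℕ, 1 ≤ m → (∑ v ∈ Finset.Icc 1 m, b v) ≤ C * X m)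
    (hk : 1 ≤ k) :
    ∃ D : ℝ, ∀ m : ℕ, (∑ n ∈ Finset.Icc 1 m, |lam n| ^ k * b n) ≤ D := by
  obtain ⟨a, ha, hXa⟩ := hX.exists_pos_le_s13
  obtain ⟨C₁, hC₁⟩ := hlamX
  have hX_nonneg (n : ℕ) : 0 ≤ X n := ha.le.trans (hXa n)
  obtain ⟨C₂, hC₂, hB⟩ := exists_nonneg_sum_Icc_le_mul hX_nonneg hbX
  have hlam_le (n : ℕ) : |lam n| ≤ C₁ / a := by
    rw [le_div_iff₀ ha]
    exact (mul_le_mul_of_nonneg_left (hXa n) (abs_nonneg _)).trans (hC₁ n)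
  have hM : 0 ≤ C₁ / a := (abs_nonneg _).trans (hlam_le 0)
  set S := ∑' n, |lam n - lam (n + 1)| * X n
  have hS (m : ℕ) : ∑ n ∈ range m, |lam n - lam (n + 1)| * X n ≤ S :=
    hΔ.sum_le_tsum _ fun n _ => mul_nonneg (abs_nonneg _) (hX_nonneg n)
  refine ⟨(C₁ / a) ^ (k - 1) * (C₂ * (C₁ + S)), fun m => ?_⟩
  calc ∑ n ∈ Icc 1 m, |lam n| ^ k * b n
      ≤ ∑ n ∈ Icc 1 m, (C₁ / a) ^ (k - 1) * (|lam n| * b n) := by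
        refine sum_le_sum fun n _ => ?_
        rw [← mul_assoc]
        exact mul_le_mul_of_nonneg_right
          (Real.rpow_le_rpow_sub_one_mul (abs_nonneg _) (hlam_le n) hk) (hb n)
    _ = (C₁ / a) ^ (k - 1) * ∑ n ∈ Icc 1 m, |lam n| * b n := (mul_sum ..).symm
    _ ≤ (C₁ / a) ^ (k - 1) * (C₂ * (C₁ + S)) := by
        gcongr
        exact (sum_Icc_abs_mul_le_of_sum_Icc_le hb hB m).trans
          (by gcongr; exacts [hC₁ m, hS m])
end
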